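/- Let N be a finite-dimensional L-vector space (L a field extension of L₀), equipped with a symplectic pairing ψ defined over L₀ on an L₀-form, a Φ-stable filtration datum as follows: let Fil ⊂ L ⊗_{L₀} N be an L-subspace with Fil^⊥ = Fil, and for Φ-stable L₀-subspaces N' ⊆ N define μ(N') = (dim_L((L⊗N')∩Fil) − (1/2)dim N')/dim N'. Suppose N₀ ⊊ N is a Φ-stable subspace which is semi-stable of maximal slope among Φ-stable subspaces (as in the Harder–Narasimhan filtration) and μ(N₀) > μ(N) = 0. Then N₀ ⊆ N₀^⊥. -/

import Mathlib

/-!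
Let `N₁ = N₀ ∩ N₀^⊥` be the radical of `ψ` on `N₀` (for a non-symmetric `ψ` there are a left and
a right radical, of the same dimension). It is `Φ`-stable: `ψ(Φx, Φy)` vanishes with `ψ(x, y)`,
and `Φ` maps `N₀` onto itself. As `Fil` is Lagrangian, `(L ⊗ N₀) ∩ Fil` is totally isotropic, so
its image in the nondegenerate space `(L ⊗ N₀)/(L ⊗ N₁)` has at most half its dimension. With
`d(N') = μ(N')·dim N'` this reads `d(N₀) ≤ d(N₁)`, while semistability gives
`d(N₁) ≤ μ(N₀)·dim N₁`. Since `μ(N₀) > 0`, `dim N₀ ≤ dim N₁`, that is `N₁ = N₀`.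
-/

open scoped TensorProduct

/-- The slope function `μ` attached to a point `Fil` of the Lagrangian Grassmannian:
for an `L₀`-subspace `N'` of `N`,
`μ(N') = (dim_L((L⊗N')∩Fil) − (1/2)·dim N') / dim N'`. -/
noncomputable def HNslope (L₀ L N : Type) [Field L₀] [Field L] [Algebra L₀ L]
    [AddCommGroup N] [Module L₀ N]
    (Fil : Submodule L (L ⊗[L₀] N)) (N' : Submodule L₀ N) : ℚ :=
  ((Module.finrank L ↥(N'.baseChange L ⊓ Fil) : ℚ)
      - (Module.finrank L₀ N' : ℚ) / 2) / (Module.finrank L₀ N' : ℚ)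

open Module
open LinearMap (BilinForm)

namespace Submodule

theorem baseChange_sup {R A M : Type*} [CommSemiring R] [Semiring A] [Algebra R A]
    [AddCommMonoid M] [Module R M] (p q : Submodule R M) :
    (p ⊔ q).baseChange A = p.baseChange A ⊔ q.baseChange A := by
  rw [← p.span_eq, ← q.span_eq, ← span_union, baseChange_span, baseChange_span, baseChange_span,
    Set.image_union, span_union]

variable {K L V : Type*} [Field K] [Field L] [Algebra K L] [AddCommGroup V] [Module K V]

theorem finrank_baseChange (p : Submodule K V) : finrank L (p.baseChange L) = finrank K p :=
  (toBaseChange.toLinearEquiv L p).finrank_eq.symm.trans Module.finrank_baseChange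

variable [FiniteDimensional K V]

theorem baseChange_inf (p q : Submodule K V) :
    (p ⊓ q).baseChange L = p.baseChange L ⊓ q.baseChange L := by
  refine eq_of_le_of_finrank_le (le_inf (baseChange_mono L inf_le_left)
    (baseChange_mono L inf_le_right)) ?_
  have hL := finrank_sup_add_finrank_inf_eq (p.baseChange L) (q.baseChange L)
  have hK := finrank_sup_add_finrank_inf_eq p q
  rw [← baseChange_sup] at hL
  simp only [finrank_baseChange] at hL ⊢
  omega

theorem baseChange_finsetInf {ι : Type*} (s : Finset ι) (f : ι → Submodule K V) :
    (s.inf f).baseChange L = s.inf fun i => (f i).baseChange L := by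
  classical
  induction s using Finset.induction_on with
  | empty => simp
  | insert a s _ ih => rw [Finset.inf_insert, Finset.inf_insert, baseChange_inf, ih]

end Submodule

namespace LinearMap

theorem ker_baseChange {R A M P : Type*} [CommRing R] [CommRing A] [Algebra R A]
    [Module.Flat R A] [AddCommGroup M] [Module R M] [AddCommGroup P] [Module R P]
    (f : M →ₗ[R] P) : ker (f.baseChange A) = (ker f).baseChange A := by
  ext x
  rw [mem_ker, Submodule.baseChange, mem_range, baseChange_eq_ltensor]
  exact Module.Flat.lTensor_exact A (exact_subtype_ker_map f) x

theorem finrank_ker_flip_add_finrank {K U W : Type*} [Field K] [AddCommGroup U] [Module K U]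
    [AddCommGroup W] [Module K W] [FiniteDimensional K U] [FiniteDimensional K W]
    (P : W →ₗ[K] U →ₗ[K] K) :
    finrank K (ker P.flip) + finrank K W = finrank K (ker P) + finrank K U := by
  have hrange : finrank K (range P.flip) = finrank K (range P) := by
    rw [show P.flip = P.dualMap ∘ₗ (Module.evalEquiv K U).toLinearMap from rfl, range_comp,
      LinearEquiv.range, Submodule.map_top, finrank_range_dualMap_eq_finrank_range]
  have hP := finrank_range_add_finrank_ker P
  have hPflip := finrank_range_add_finrank_ker P.flip
  omega

end LinearMap

namespace LinearMap.BilinForm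

section CommRing

variable {R A M : Type*} [CommRing R] [CommRing A] [Algebra R A] [AddCommGroup M] [Module R M]

theorem baseChange_flip (B : BilinForm R M) : B.flip.baseChange A = (B.baseChange A).flip := by
  ext
  simp

theorem orthogonal_span_finset (B : BilinForm R M) (s : Finset M) :
    B.orthogonal (Submodule.span R s) = s.inf fun x => ker (B x) := by
  ext y
  simp only [mem_orthogonal_iff, Submodule.mem_finsetInf, mem_ker]
  refine ⟨fun h x hx => h x (Submodule.subset_span hx), fun h x hx => ?_⟩
  have : Submodule.span R s ≤ ker (B.flip y) := Submodule.span_le.mpr fun x hx => h x hx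
  exact this hx

theorem ker_baseChange_one_tmul [Module.Flat R A] (B : BilinForm R M) (x : M) :
    ker (B.baseChange A (1 ⊗ₜ x)) = (ker (B x)).baseChange A := by
  have : B.baseChange A (1 ⊗ₜ x) =
      (TensorProduct.AlgebraTensorModule.rid R A A).toLinearMap ∘ₗ (B x).baseChange A := by
    ext
    simp
  rw [this, ker_comp, LinearEquiv.ker, Submodule.comap_bot, ker_baseChange]

end CommRing

variable {K L V : Type*} [Field K] [Field L] [Algebra K L] [AddCommGroup V] [Module K V]

theorem map_subtype_ker_compl₁₂ (B : BilinForm K V) (W₁ W₂ : Submodule K V) :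
    (ker (B.compl₁₂ W₁.subtype W₂.subtype)).map W₁.subtype = W₁ ⊓ B.flip.orthogonal W₂ := by
  ext x
  simp only [Submodule.mem_map, mem_ker, Submodule.mem_inf, mem_orthogonal_iff]
  constructor
  · rintro ⟨y, hy, rfl⟩
    exact ⟨y.2, fun w hw => by simpa using LinearMap.congr_fun hy ⟨w, hw⟩⟩
  · rintro ⟨hx, hxW⟩
    exact ⟨⟨x, hx⟩, by ext w; simpa using hxW w w.2, rfl⟩

variable [FiniteDimensional K V]

theorem finrank_inf_orthogonal_flip (B : BilinForm K V) (W : Submodule K V) :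
    finrank K ↥(W ⊓ B.flip.orthogonal W) = finrank K ↥(W ⊓ B.orthogonal W) := by
  have h := finrank_ker_flip_add_finrank (B.compl₁₂ W.subtype W.subtype)
  rw [add_left_inj, show (B.compl₁₂ W.subtype W.subtype).flip =
      B.flip.compl₁₂ W.subtype W.subtype from rfl,
    ← Submodule.finrank_map_subtype_eq W (ker (B.flip.compl₁₂ _ _)),
    ← Submodule.finrank_map_subtype_eq W (ker (B.compl₁₂ _ _)),
    map_subtype_ker_compl₁₂, map_subtype_ker_compl₁₂, show B.flip.flip = B from rfl] at h
  exact h.symm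

/-- "A totally isotropic subspace has at most half the dimension of a nondegenerate space",
for the form `B` on `W`, whose left and right radicals need not be zero. -/
theorem two_mul_finrank_add_finrank_inf_orthogonal_le (B : BilinForm K V)
    {W U : Submodule K V} (hUW : U ≤ W) (hU : ∀ x ∈ U, ∀ y ∈ U, B x y = 0) :
    2 * finrank K U + finrank K ↥(W ⊓ B.flip.orthogonal W) ≤
      finrank K W + finrank K ↥(U ⊓ B.flip.orthogonal W) + finrank K ↥(U ⊓ B.orthogonal W) := by
  have hP := finrank_ker_flip_add_finrank (B.compl₁₂ W.subtype U.subtype)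
  rw [show (B.compl₁₂ W.subtype U.subtype).flip = B.flip.compl₁₂ U.subtype W.subtype from rfl,
    ← Submodule.finrank_map_subtype_eq U (ker (B.flip.compl₁₂ _ _)),
    ← Submodule.finrank_map_subtype_eq W (ker (B.compl₁₂ _ _)),
    map_subtype_ker_compl₁₂, map_subtype_ker_compl₁₂, show B.flip.flip = B from rfl] at hP
  have hle : U ⊔ (W ⊓ B.flip.orthogonal W) ≤ W ⊓ B.flip.orthogonal U :=
    sup_le (le_inf hUW fun x hx y hy => hU x hx y hy) (inf_le_inf_left W (orthogonal_le hUW))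
  have hinf : U ⊓ (W ⊓ B.flip.orthogonal W) = U ⊓ B.flip.orthogonal W := by
    rw [← inf_assoc, inf_eq_left.mpr hUW]
  have hdim := Submodule.finrank_sup_add_finrank_inf_eq U (W ⊓ B.flip.orthogonal W)
  rw [hinf] at hdim
  have hmono := Submodule.finrank_mono hle
  omega

theorem orthogonal_baseChange (B : BilinForm K V) (W : Submodule K V) :
    (B.baseChange L).orthogonal (W.baseChange L) = (B.orthogonal W).baseChange L := by
  classical
  obtain ⟨s, rfl⟩ : W.FG := IsNoetherian.noetherian W
  rw [Submodule.baseChange_span, ← Finset.coe_image, orthogonal_span_finset,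
    orthogonal_span_finset, Finset.inf_image, Submodule.baseChange_finsetInf]
  exact Finset.inf_congr rfl fun x _ => ker_baseChange_one_tmul B x

theorem baseChange_inf_orthogonal (B : BilinForm K V) (W : Submodule K V) :
    (W ⊓ B.orthogonal W).baseChange L =
      W.baseChange L ⊓ (B.baseChange L).orthogonal (W.baseChange L) := by
  rw [Submodule.baseChange_inf, orthogonal_baseChange]

end LinearMap.BilinForm

section Frobenius

variable {K V : Type*} [Field K] [AddCommGroup V] [Module K V] [FiniteDimensional K V]
  (σ : K ≃+* K) (Φ : V ≃+ V)

theorem AddEquiv.symm_apply_mem_of_semilinear (hΦ : ∀ (a : K) (x : V), Φ (a • x) = σ a • Φ x)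
    (W : Submodule K V) (hW : ∀ x ∈ W, Φ x ∈ W) :
    ∀ x ∈ W, Φ.symm x ∈ W := by
  let W' : Submodule K V :=
    { carrier := Φ ⁻¹' W
      add_mem' := fun hx hy => by simpa using W.add_mem hx hy
      zero_mem' := by simp
      smul_mem' := fun a x hx => by simpa [Set.mem_preimage, hΦ] using W.smul_mem (σ a) hx }
  let restrict : W' →+ W :=
    { toFun := fun x => ⟨Φ x, x.2⟩
      map_zero' := by ext; simp
      map_add' := fun x y => by ext; simp }
  have hrank := lift_rank_le_of_surjective_injective σ restrict σ.surjective
    (fun x y h => Subtype.ext (Φ.injective (congrArg Subtype.val h)))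
    (fun a x => Subtype.ext (hΦ a x))
  have hW' : W' = W := (Submodule.eq_of_le_of_finrank_le (fun x hx => hW x hx)
    (finrank_le_finrank_of_rank_le_rank hrank (rank_lt_aleph0 _ _))).symm
  intro x hx
  rw [← hW']
  simpa [W'] using hx

theorem LinearMap.BilinForm.apply_mem_inf_orthogonal
    (hΦ : ∀ (a : K) (x : V), Φ (a • x) = σ a • Φ x) (B : BilinForm K V) (c : K)
    (hB : ∀ x y, B (Φ x) (Φ y) = c * σ (B x y)) (W : Submodule K V) (hW : ∀ x ∈ W, Φ x ∈ W) :
    ∀ x ∈ W ⊓ B.orthogonal W, Φ x ∈ W ⊓ B.orthogonal W := by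
  rintro x ⟨hxW, hx⟩
  refine ⟨hW x hxW, fun w hw => ?_⟩
  have h := hB (Φ.symm w) x
  rwa [Φ.apply_symm_apply, hx _ (Φ.symm_apply_mem_of_semilinear σ hΦ W hW w hw), map_zero,
    mul_zero] at h

end Frobenius

section Slope

variable {L₀ L N : Type} [Field L₀] [Field L] [Algebra L₀ L] [AddCommGroup N] [Module L₀ N]

theorem HNslope_bot (Fil : Submodule L (L ⊗[L₀] N)) : HNslope L₀ L N Fil ⊥ = 0 := by
  simp [HNslope]

variable [FiniteDimensional L₀ N]

/-- Also at `N' = ⊥`, where `HNslope` takes the junk value `0 / 0 = 0`. -/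
theorem HNslope_mul_finrank (Fil : Submodule L (L ⊗[L₀] N)) (N' : Submodule L₀ N) :
    HNslope L₀ L N Fil N' * finrank L₀ N' =
      finrank L ↥(N'.baseChange L ⊓ Fil) - (finrank L₀ N' : ℚ) / 2 := by
  rcases eq_or_ne (finrank L₀ N' : ℚ) 0 with h | h
  · obtain rfl : N' = ⊥ := Submodule.finrank_eq_zero.mp (by exact_mod_cast h)
    rw [Submodule.baseChange_bot, bot_inf_eq]
    simp
  · exact div_mul_cancel₀ _ h

theorem two_mul_HNslope_mul_finrank_le (ψ : BilinForm L₀ N) (Fil : Submodule L (L ⊗[L₀] N))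
    (hFil : Fil ≤ (ψ.baseChange L).orthogonal Fil) (N₀ : Submodule L₀ N) :
    2 * (HNslope L₀ L N Fil N₀ * finrank L₀ N₀) ≤
      (HNslope L₀ L N Fil (N₀ ⊓ ψ.flip.orthogonal N₀) +
        HNslope L₀ L N Fil (N₀ ⊓ ψ.orthogonal N₀)) * finrank L₀ ↥(N₀ ⊓ ψ.orthogonal N₀) := by
  have h := (ψ.baseChange L).two_mul_finrank_add_finrank_inf_orthogonal_le
    (inf_le_left : N₀.baseChange L ⊓ Fil ≤ _) fun x hx y hy => hFil hy.2 x hx.2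
  rw [inf_right_comm, inf_right_comm _ Fil, ← BilinForm.baseChange_flip,
    ← BilinForm.baseChange_inf_orthogonal, ← BilinForm.baseChange_inf_orthogonal,
    Submodule.finrank_baseChange, Submodule.finrank_baseChange,
    BilinForm.finrank_inf_orthogonal_flip] at h
  have hl := HNslope_mul_finrank Fil (N₀ ⊓ ψ.flip.orthogonal N₀)
  rw [BilinForm.finrank_inf_orthogonal_flip] at hl
  rw [add_mul, hl, HNslope_mul_finrank, HNslope_mul_finrank]
  have hQ := (Nat.cast_le (α := ℚ)).mpr h
  push_cast at hQ
  linarith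

end Slope

theorem HN_destabilizing_subspace_totally_isotropic
    (p : ℕ)
    (L₀ L N : Type) [Field L₀] [Field L] [Algebra L₀ L]
    [AddCommGroup N] [Module L₀ N] [FiniteDimensional L₀ N]
    (σ : L₀ ≃+* L₀)
    (Φ : N ≃+ N) (hΦ : ∀ (a : L₀) (x : N), Φ (a • x) = σ a • Φ x)
    (ψ : N →ₗ[L₀] N →ₗ[L₀] L₀)
    (hψΦ : ∀ x y : N, ψ (Φ x) (Φ y) = (p : L₀) * σ (ψ x y))
    (Fil : Submodule L (L ⊗[L₀] N))
    (hFil : LinearMap.BilinForm.orthogonal (LinearMap.BilinForm.baseChange L ψ) Fil = Fil)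
    (N₀ : Submodule L₀ N)
    (hstab : ∀ x ∈ N₀, Φ x ∈ N₀)
    (hsemistable : ∀ N'' : Submodule L₀ N, N'' ≤ N₀ → N'' ≠ ⊥ → (∀ x ∈ N'', Φ x ∈ N'') →
      HNslope L₀ L N Fil N'' ≤ HNslope L₀ L N Fil N₀)
    (hpos : 0 < HNslope L₀ L N Fil N₀) :
    ∀ x ∈ N₀, ∀ y ∈ N₀, ψ x y = 0 := by
  have hslope_le (N'' : Submodule L₀ N) (hle : N'' ≤ N₀) (hN'' : ∀ x ∈ N'', Φ x ∈ N'') :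
      HNslope L₀ L N Fil N'' ≤ HNslope L₀ L N Fil N₀ := by
    rcases eq_or_ne N'' ⊥ with rfl | hne
    · exact (HNslope_bot Fil).trans_le hpos.le
    · exact hsemistable N'' hle hne hN''
  have hl := hslope_le _ inf_le_left
    (LinearMap.BilinForm.apply_mem_inf_orthogonal σ Φ hΦ (LinearMap.BilinForm.flip ψ) p
      (fun x y => hψΦ y x) N₀ hstab)
  have hr := hslope_le _ inf_le_left
    (LinearMap.BilinForm.apply_mem_inf_orthogonal σ Φ hΦ ψ p hψΦ N₀ hstab)
  have hdeficiency := two_mul_HNslope_mul_finrank_le ψ Fil hFil.ge N₀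
  set Rad := N₀ ⊓ LinearMap.BilinForm.orthogonal ψ N₀
  have hdim : finrank L₀ N₀ ≤ finrank L₀ Rad := by
    have hbound :=
      mul_le_mul_of_nonneg_right (add_le_add hl hr) (Nat.cast_nonneg' (finrank L₀ Rad))
    have hQ : (finrank L₀ N₀ : ℚ) ≤ finrank L₀ Rad :=
      le_of_mul_le_mul_left (by linarith) hpos
    exact_mod_cast hQ
  have hRad : Rad = N₀ := Submodule.eq_of_le_of_finrank_le inf_le_left hdim
  intro x hx y hy
  exact (hRad ▸ hy : y ∈ Rad).2 x hx
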